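/- Let (Ω, F, Q) be a probability space with filtration 𝔾 = (G_t)_{t≥0}, let τ be a (0,∞]-valued 𝔾-stopping time with indicator process H(t) = 1_{τ ≤ t}, and let X be a nonnegative 𝔾-progressively measurable process with E[∫_0^t X(s) ds] < ∞ for all t ≥ 0, such that M(t) := H(t) − ∫_0^{t∧τ} X(s) ds is a 𝔾-martingale. Then for every bounded, left-continuous, 𝔾-adapted real-valued process φ and all 0 ≤ t ≤ T, almost surely, E[ φ(τ) 1_{t < τ ≤ T} | G_t ] = E[ ∫_{t∧τ}^{T∧τ} φ(u) X(u) du | G_t ]. -/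

import Mathlib

open MeasureTheory Set
open scoped ENNReal

/-- With `X` the intensity of the default time `τ`, for every bounded left-continuous
adapted process `φ` and `0 ≤ t ≤ T` one has
`E[φ(τ) 1_{t < τ ≤ T} | G_t] = E[∫_{t∧τ}^{T∧τ} φ(u) X(u) du | G_t]` a.s. -/
theorem stmt3
    {Ω : Type*} {m : MeasurableSpace Ω} (μ : Measure Ω) [IsProbabilityMeasure μ]
    (𝒢 : Filtration ℝ m)
    (τ : Ω → ℝ≥0∞) (hτ_pos : ∀ ω, 0 < τ ω)
    (hτ_stop : ∀ t : ℝ, MeasurableSet[𝒢 t] {ω | τ ω ≤ ENNReal.ofReal t})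
    (X : ℝ → Ω → ℝ) (hX_nonneg : ∀ t ω, 0 ≤ X t ω)
    (hX_prog : ProgMeasurable 𝒢 X)
    (hX_int : ∀ t : ℝ,
      (∫⁻ ω, (∫⁻ s in Ioc (0 : ℝ) t, ENNReal.ofReal (X s ω)) ∂μ) < ⊤)
    (M : ℝ → Ω → ℝ)
    (hM_def : ∀ t ω, M t ω =
      (if τ ω ≤ ENNReal.ofReal t then (1 : ℝ) else 0)
        - ∫ u in Ioc (0 : ℝ) t, (if ENNReal.ofReal u ≤ τ ω then X u ω else 0))
    (hM_mart : Martingale M 𝒢 μ) :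
    ∀ (φ : ℝ → Ω → ℝ),
      (∃ C : ℝ, ∀ t ω, |φ t ω| ≤ C) →
      (∀ ω t, ContinuousWithinAt (fun s => φ s ω) (Iio t) t) →
      Adapted 𝒢 φ →
      ∀ t T : ℝ, 0 ≤ t → t ≤ T →
        μ[(fun ω =>
            if ENNReal.ofReal t < τ ω ∧ τ ω ≤ ENNReal.ofReal T
            then φ (τ ω).toReal ω else 0) | 𝒢 t]
          =ᵐ[μ]
        μ[(fun ω => ∫ u in Ioc t T,
            (if ENNReal.ofReal u ≤ τ ω then φ u ω * X u ω else 0)) | 𝒢 t] := by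
  intro φ hφC hφlc hφad t T ht htT
  classical
  obtain ⟨C0, hC0⟩ := hφC
  set C : ℝ := max C0 0 with hCdef
  have hC : ∀ s ω, |φ s ω| ≤ C := fun s ω => (hC0 s ω).trans (le_max_left _ _)
  have hCnn : (0:ℝ) ≤ C := le_max_right _ _
  rcases eq_or_lt_of_le htT with rfl | htT'
  · have h1 : (fun ω => if ENNReal.ofReal t < τ ω ∧ τ ω ≤ ENNReal.ofReal t
        then φ (τ ω).toReal ω else 0) = fun _ : Ω => (0:ℝ) := by
      funext ω
      rw [if_neg]
      rintro ⟨ha, hb⟩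
      exact absurd (lt_of_lt_of_le ha hb) (lt_irrefl _)
    have h2 : (fun ω => ∫ u in Ioc t t,
        (if ENNReal.ofReal u ≤ τ ω then φ u ω * X u ω else 0)) = fun _ : Ω => (0:ℝ) := by
      funext ω; simp
    rw [h1, h2]
  · have htT : t ≤ T := le_of_lt htT'
    have hT : (0:ℝ) ≤ T := ht.trans htT
    have hm : 𝒢 t ≤ m := 𝒢.le t
    -- joint strong measurability of truncated X
    have hXj : StronglyMeasurable (fun p : ℝ × Ω => X (min p.1 T) p.2) := by
      have hsnd : Measurable[Prod.instMeasurableSpace (m₁ := (inferInstance : MeasurableSpace ℝ)) (m₂ := m), 𝒢 T] (Prod.snd : ℝ × Ω → Ω) :=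
        measurable_snd.mono le_rfl (𝒢.le T)
      have hg : Measurable[Prod.instMeasurableSpace,
          (Subtype.instMeasurableSpace : MeasurableSpace (Set.Iic T)).prod (𝒢 T)]
          (fun p : ℝ × Ω => ((⟨min p.1 T, mem_Iic.mpr (min_le_right _ _)⟩ : Set.Iic T), p.2)) := by
        exact Measurable.prodMk ((measurable_fst.min measurable_const).subtype_mk) hsnd
      exact (hX_prog T).comp_measurable hg
    -- section measurability
    have hXsec : ∀ ω, StronglyMeasurable (fun u : ℝ => X (min u T) ω) := by
      intro ω
      exact hXj.comp_measurable (measurable_id.prodMk measurable_const)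
    -- measurability of the time set
    have hτset : ∀ ω, MeasurableSet {u : ℝ | ENNReal.ofReal u ≤ τ ω} := by
      intro ω
      exact ENNReal.measurable_ofReal measurableSet_Iic
    set K : ℝ → Ω → ℝ := fun u ω => if ENNReal.ofReal u ≤ τ ω then X u ω else 0 with hK
    -- a.e. integrability of K on Ioc 0 T
    have hKsec : ∀ ω, StronglyMeasurable (fun u : ℝ => if ENNReal.ofReal u ≤ τ ω then X (min u T) ω else 0) := by
      intro ω
      exact StronglyMeasurable.ite (hτset ω) (hXsec ω) stronglyMeasurable_const
    have hKint : ∀ᵐ ω ∂μ, IntegrableOn (fun u => K u ω) (Ioc 0 T) (volume : Measure ℝ) := by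
      have hmeas : Measurable (fun ω => ∫⁻ u in Ioc (0:ℝ) T, ENNReal.ofReal (X (min u T) ω)) := by
        have hu : Measurable (Function.uncurry fun (ω : Ω) (u : ℝ) => ENNReal.ofReal (X (min u T) ω)) := by
          have : Measurable (fun p : Ω × ℝ => X (min p.2 T) p.1) :=
            hXj.measurable.comp (measurable_snd.prodMk measurable_fst)
          exact ENNReal.measurable_ofReal.comp this
        exact hu.lintegral_prod_right'
      have hcongr : ∀ ω, (∫⁻ u in Ioc (0:ℝ) T, ENNReal.ofReal (X (min u T) ω))
          = ∫⁻ u in Ioc (0:ℝ) T, ENNReal.ofReal (X u ω) := by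
        intro ω
        refine setLIntegral_congr_fun measurableSet_Ioc ?_
        intro u hu
        simp only [min_eq_left hu.2]
      have hfin : ∀ᵐ ω ∂μ, (∫⁻ u in Ioc (0:ℝ) T, ENNReal.ofReal (X u ω)) < ⊤ := by
        have := ae_lt_top hmeas (by
          rw [lintegral_congr hcongr] ; exact (hX_int T).ne)
        filter_upwards [this] with ω hω
        rw [← hcongr ω]; exact hω
      filter_upwards [hfin] with ω hω
      constructor
      · refine ((hKsec ω).aestronglyMeasurable).congr ?_
        refine (ae_restrict_iff' measurableSet_Ioc).mpr (Filter.Eventually.of_forall ?_)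
        intro u hu
        simp only [hK, min_eq_left hu.2]
      · rw [hasFiniteIntegral_iff_norm]
        refine lt_of_le_of_lt (lintegral_mono (fun u => ?_)) hω
        rcases le_or_gt (ENNReal.ofReal u) (τ ω) with h | h
        · simp only [hK, if_pos h, Real.norm_of_nonneg (hX_nonneg u ω)]
          exact le_refl _
        · simp only [hK, if_neg (not_le.mpr h), norm_zero, ENNReal.ofReal_zero]
          exact zero_le
    set Hf : ℝ → Ω → ℝ := fun s ω => if τ ω ≤ ENNReal.ofReal s then (1:ℝ) else 0 with hHf
    set I : ℝ → ℝ → Ω → ℝ := fun a b ω => ∫ u in Ioc a b, K u ω with hIdef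
    have hMint : ∀ b : ℝ, Integrable (M b) μ := fun b => hM_mart.integrable b
    have hHmeas : ∀ s : ℝ, StronglyMeasurable[𝒢 s] (Hf s) := by
      intro s
      exact StronglyMeasurable.ite (hτ_stop s) stronglyMeasurable_const stronglyMeasurable_const
    have hHint : ∀ s : ℝ, Integrable (Hf s) μ := by
      intro s
      refine Integrable.mono' (integrable_const (1:ℝ)) (((hHmeas s).mono (𝒢.le s)).aestronglyMeasurable) ?_
      refine Filter.Eventually.of_forall fun ω => ?_
      by_cases h : τ ω ≤ ENNReal.ofReal s <;> simp [hHf, h]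
    have Isplit : ∀ᵐ ω ∂μ, ∀ a b : ℝ, 0 ≤ a → a ≤ b → b ≤ T →
        I 0 a ω + I a b ω = I 0 b ω := by
      filter_upwards [hKint] with ω hω a b ha hab hbT
      rw [hIdef]
      simp only
      rw [← setIntegral_union (Ioc_disjoint_Ioc_of_le le_rfl) measurableSet_Ioc
          (hω.mono_set (Ioc_subset_Ioc le_rfl (hab.trans hbT)))
          (hω.mono_set (Ioc_subset_Ioc ha hbT)),
        Ioc_union_Ioc_eq_Ioc ha hab]
    have hIdiff : ∀ a b : ℝ, 0 ≤ a → a ≤ b → b ≤ T →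
        (fun ω => I a b ω) =ᵐ[μ] fun ω => (Hf b ω - Hf a ω) - (M b ω - M a ω) := by
      intro a b ha hab hbT
      filter_upwards [Isplit] with ω hω
      have h1 := hM_def b ω
      have h2 := hM_def a ω
      have h3 := hω a b ha hab hbT
      simp only [hIdef, hHf, hK] at h1 h2 h3 ⊢
      linarith
    have hIint : ∀ a b : ℝ, 0 ≤ a → a ≤ b → b ≤ T → Integrable (fun ω => I a b ω) μ := by
      intro a b ha hab hbT
      refine Integrable.congr ?_ (hIdiff a b ha hab hbT).symm
      exact ((hHint b).sub (hHint a)).sub ((hMint b).sub (hMint a))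
    haveI : SigmaFinite (μ.trim (𝒢.le T)) := by infer_instance
    have key : ∀ a b : ℝ, 0 ≤ a → a ≤ b → b ≤ T → ∀ g : Ω → ℝ,
        StronglyMeasurable[𝒢 a] g → (∀ ω, |g ω| ≤ C) →
        ∫ ω, g ω * (Hf b ω - Hf a ω) ∂μ = ∫ ω, g ω * I a b ω ∂μ := by
      intro a b ha hab hbT g hg hgC
      have hgm : AEStronglyMeasurable g μ := ((hg.mono (𝒢.le a)).aestronglyMeasurable)
      have hgbdd : ∀ᵐ ω ∂μ, ‖g ω‖ ≤ C := Filter.Eventually.of_forall fun ω => hgC ω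
      have hint2 : Integrable (fun ω => M b ω - M a ω) μ := (hMint b).sub (hMint a)
      have hint1 : Integrable (fun ω => g ω * (M b ω - M a ω)) μ := hint2.bdd_mul hgm hgbdd
      have hzero : μ[fun ω => M b ω - M a ω | 𝒢 a] =ᵐ[μ] 0 := by
        have h1 : μ[fun ω => M b ω - M a ω | 𝒢 a] =ᵐ[μ] μ[M b | 𝒢 a] - μ[M a | 𝒢 a] :=
          condExp_sub (hMint b) (hMint a) _
        have h2 : μ[M b | 𝒢 a] =ᵐ[μ] M a := hM_mart.condExp_ae_eq hab
        have h3 : μ[M a | 𝒢 a] = M a :=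
          condExp_of_stronglyMeasurable (𝒢.le a) (hM_mart.1 a) (hMint a)
        filter_upwards [h1, h2] with ω h1ω h2ω
        simp only [h1ω, Pi.sub_apply, h2ω, h3, Pi.zero_apply, sub_self]
      have hce : μ[(fun ω => g ω * (M b ω - M a ω)) | 𝒢 a]
          =ᵐ[μ] fun ω => g ω * (μ[fun ω => M b ω - M a ω | 𝒢 a]) ω :=
        condExp_mul_of_stronglyMeasurable_left hg hint1 hint2
      have hZ : ∫ ω, g ω * (M b ω - M a ω) ∂μ = 0 := by
        have h4 : (fun ω => g ω * (μ[fun ω => M b ω - M a ω | 𝒢 a]) ω) =ᵐ[μ] (fun _ => (0:ℝ)) := by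
          filter_upwards [hzero] with ω hω
          simp [hω]
        rw [← integral_condExp (𝒢.le a), integral_congr_ae (hce.trans h4), integral_zero]
      have hintI : Integrable (fun ω => g ω * I a b ω) μ :=
        (hIint a b ha hab hbT).bdd_mul hgm hgbdd
      have hsub : (fun ω => g ω * (Hf b ω - Hf a ω))
          =ᵐ[μ] fun ω => g ω * I a b ω + g ω * (M b ω - M a ω) := by
        filter_upwards [hIdiff a b ha hab hbT] with ω hω
        rw [hω]; ring
      rw [integral_congr_ae hsub, integral_add hintI hint1, hZ, add_zero]
    -- partitions
    set δ : ℕ → ℝ := fun n => (T - t) / (n + 1) with hδdef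
    have hδpos : ∀ n, 0 < δ n := fun n => div_pos (sub_pos.2 htT') (by positivity)
    set p : ℕ → ℕ → ℝ := fun n i => t + δ n * i with hpdef
    set l : ℕ → ℝ → ℝ := fun n u => t + δ n * ((⌈(u - t) / δ n⌉ : ℤ) - 1) with hldef
    have hp0 : ∀ n, p n 0 = t := by intro n; simp [hpdef]
    have hplast : ∀ n, p n (n + 1) = T := by
      intro n
      have hne : ((n:ℝ) + 1) ≠ 0 := by positivity
      simp only [hpdef, hδdef]; push_cast; rw [div_mul_cancel₀ _ hne]
      ring
    have hpmono : ∀ n i j, i ≤ j → p n i ≤ p n j := by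
      intro n i j hij
      have : (i:ℝ) ≤ (j:ℝ) := Nat.cast_le.mpr hij
      simp only [hpdef]
      nlinarith [hδpos n]
    have hpt : ∀ n i, t ≤ p n i := by
      intro n i
      have := hpmono n 0 i (Nat.zero_le i)
      rwa [hp0] at this
    have hpT : ∀ n i, i ≤ n + 1 → p n i ≤ T := by
      intro n i hi
      have := hpmono n i (n+1) hi
      rwa [hplast] at this
    -- index selection
    have hiu : ∀ n (u : ℝ), u ∈ Ioc t T → ∃ i, i ∈ Finset.range (n+1) ∧
        p n i = l n u ∧ u ∈ Ioc (p n i) (p n (i+1)) := by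
      intro n u hu
      have hδ := hδpos n
      set x : ℝ := (u - t) / δ n with hxdef
      have hx0 : 0 < x := div_pos (sub_pos.2 hu.1) hδ
      have hxeq : δ n * x = u - t := by rw [hxdef]; exact mul_div_cancel₀ _ hδ.ne'
      have hxle : x ≤ (n:ℝ) + 1 := by
        rw [hxdef, div_le_iff₀ hδ]
        have h1 : u - t ≤ T - t := by linarith [hu.2]
        have h2 : T - t = ((n:ℝ)+1) * δ n := by simp only [hδdef]; rw [mul_div_cancel₀ _ (by positivity : ((n:ℝ)+1) ≠ 0)]
        linarith
      have hj1 : 1 ≤ ⌈x⌉ := by exact_mod_cast Int.ceil_pos.mpr hx0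
      have hjle : ⌈x⌉ ≤ (n:ℤ) + 1 := Int.ceil_le.mpr (by exact_mod_cast hxle)
      obtain ⟨i, hi⟩ : ∃ i : ℕ, (⌈x⌉ : ℤ) = i + 1 := ⟨(⌈x⌉ - 1).toNat, by omega⟩
      have hicast : ((i:ℕ):ℝ) = (⌈x⌉:ℝ) - 1 := by
        have : ((⌈x⌉:ℤ):ℝ) = (i:ℝ) + 1 := by exact_mod_cast hi
        linarith
      have hicast1 : ((i+1:ℕ):ℝ) = (⌈x⌉:ℝ) := by push_cast; linarith
      refine ⟨i, ?_, ?_, ?_, ?_⟩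
      · rw [Finset.mem_range]
        have : (i:ℤ) + 1 ≤ (n:ℤ) + 1 := by omega
        omega
      · simp only [hpdef, hldef, hicast, hxdef]
      · -- p n i < u
        simp only [hpdef, hicast]
        have hlt : (⌈x⌉:ℝ) - 1 < x := by
          have := Int.ceil_lt_add_one x
          linarith
        nlinarith
      · -- u ≤ p n (i+1)
        simp only [hpdef, hicast1]
        have hle : x ≤ (⌈x⌉:ℝ) := Int.le_ceil x
        nlinarith
    set ψ : ℕ → ℝ → Ω → ℝ := fun n u ω => ∑ i ∈ Finset.range (n+1),
        (Ioc (p n i) (p n (i+1))).indicator (fun _ => φ (p n i) ω) u with hψdef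
    have hψeq : ∀ n ω (u : ℝ), u ∈ Ioc t T → ψ n u ω = φ (l n u) ω := by
      intro n ω u hu
      obtain ⟨i, hir, hpl, hmem⟩ := hiu n u hu
      rw [hψdef]
      simp only
      rw [Finset.sum_eq_single_of_mem i hir]
      · rw [indicator_of_mem hmem, hpl]
      · intro j hjr hne
        refine indicator_of_notMem ?_ _
        rcases hne.lt_or_gt with hj | hj
        · intro hmem'
          have : p n (j+1) ≤ p n i := hpmono n (j+1) i hj
          exact absurd hmem'.2 (not_le.mpr (lt_of_le_of_lt this hmem.1))
        · intro hmem'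
          have : p n (i+1) ≤ p n j := hpmono n (i+1) j hj
          exact absurd hmem'.1 (not_lt.mpr (hmem.2.trans this))
    have hψbdd : ∀ n ω (u : ℝ), u ∈ Ioc t T → |ψ n u ω| ≤ C := by
      intro n ω u hu
      rw [hψeq n ω u hu]
      exact hC _ ω
    -- convergence of l
    have hδlim : Filter.Tendsto δ Filter.atTop (nhds 0) := by
      rw [hδdef]
      have h1 : Filter.Tendsto (fun n : ℕ => ((n:ℝ) + 1)) Filter.atTop Filter.atTop :=
        Filter.tendsto_atTop_add_const_right _ 1 tendsto_natCast_atTop_atTop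
      simpa using Filter.Tendsto.div_atTop (tendsto_const_nhds (x := T - t)) h1
    have hlbound : ∀ n (u : ℝ), u - δ n ≤ l n u ∧ l n u < u := by
      intro n u
      have hδ := hδpos n
      set x : ℝ := (u - t) / δ n with hxdef
      have hxeq : δ n * x = u - t := by rw [hxdef]; exact mul_div_cancel₀ _ hδ.ne'
      constructor
      · have : x - 1 ≤ (⌈x⌉:ℝ) - 1 := by linarith [Int.le_ceil x]
        simp only [hldef]
        nlinarith
      · have : (⌈x⌉:ℝ) - 1 < x := by linarith [Int.ceil_lt_add_one x]
        simp only [hldef]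
        nlinarith
    have hltend : ∀ u : ℝ, Filter.Tendsto (fun n => l n u) Filter.atTop (nhdsWithin u (Iio u)) := by
      intro u
      refine tendsto_nhdsWithin_of_tendsto_nhds_of_eventually_within _ ?_ ?_
      · have hlow : Filter.Tendsto (fun n => u - δ n) Filter.atTop (nhds u) := by
          have := Filter.Tendsto.const_sub u hδlim
          simpa using this
        have h1 : (fun n : ℕ => u - δ n) ≤ (fun n : ℕ => l n u) := fun n => (hlbound n u).1
        have h2 : (fun n : ℕ => l n u) ≤ (fun _ : ℕ => u) := fun n => le_of_lt (hlbound n u).2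
        exact tendsto_of_tendsto_of_tendsto_of_le_of_le hlow (tendsto_const_nhds (x := u)) h1 h2
      · exact Filter.Eventually.of_forall (fun n => (hlbound n u).2)
    have hφconv : ∀ ω (u : ℝ), Filter.Tendsto (fun n => φ (l n u) ω) Filter.atTop (nhds (φ u ω)) := by
      intro ω u
      exact (hφlc ω u).tendsto.comp (hltend u)
    -- the key pointwise sum identity
    have hTnn : (0:ℝ) ≤ T := hT
    have hsum1 : ∀ n ω, (∑ i ∈ Finset.range (n+1),
        φ (p n i) ω * (Hf (p n (i+1)) ω - Hf (p n i) ω))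
        = if ENNReal.ofReal t < τ ω ∧ τ ω ≤ ENNReal.ofReal T then ψ n (τ ω).toReal ω else 0 := by
      intro n ω
      by_cases hcond : ENNReal.ofReal t < τ ω ∧ τ ω ≤ ENNReal.ofReal T
      · obtain ⟨h1, h2⟩ := hcond
        have hne : τ ω ≠ ⊤ := ne_top_of_le_ne_top ENNReal.ofReal_ne_top h2
        set r : ℝ := (τ ω).toReal with hrdef
        have hτr : τ ω = ENNReal.ofReal r := (ENNReal.ofReal_toReal hne).symm
        have htr : t < r := by
          rw [hτr] at h1
          exact (ENNReal.ofReal_lt_ofReal_iff_of_nonneg ht).mp h1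
        have hrT : r ≤ T := by
          rw [hτr] at h2
          exact (ENNReal.ofReal_le_ofReal_iff hTnn).mp h2
        have hrm : r ∈ Ioc t T := ⟨htr, hrT⟩
        have Hchar : ∀ s : ℝ, 0 ≤ s → (Hf s ω = if r ≤ s then 1 else 0) := by
          intro s hs
          simp only [hHf, hτr, ENNReal.ofReal_le_ofReal_iff hs]
        obtain ⟨i, hir, hpl, hmem⟩ := hiu n r hrm
        rw [if_pos ⟨h1, h2⟩, hψeq n ω r hrm]
        rw [Finset.sum_eq_single_of_mem i hir]
        · rw [Hchar (p n (i+1)) (ht.trans (hpt n (i+1))), Hchar (p n i) (ht.trans (hpt n i)),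
            if_pos hmem.2, if_neg (not_le.mpr hmem.1), hpl]
          ring
        · intro j hjr hne'
          rw [Hchar (p n (j+1)) (ht.trans (hpt n (j+1))), Hchar (p n j) (ht.trans (hpt n j))]
          rcases hne'.lt_or_gt with hj | hj
          · have hle : p n (j+1) ≤ p n i := hpmono n (j+1) i hj
            have h3 : ¬ r ≤ p n (j+1) := not_le.mpr (lt_of_le_of_lt hle hmem.1)
            have h4 : ¬ r ≤ p n j := not_le.mpr (lt_of_le_of_lt ((hpmono n j (j+1) (Nat.le_succ j)).trans hle) hmem.1)
            rw [if_neg h3, if_neg h4]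
            ring
          · have hle : p n (i+1) ≤ p n j := hpmono n (i+1) j hj
            have h3 : r ≤ p n j := hmem.2.trans hle
            have h4 : r ≤ p n (j+1) := h3.trans (hpmono n j (j+1) (Nat.le_succ j))
            rw [if_pos h3, if_pos h4]
            ring
      · rw [if_neg hcond]
        rcases le_or_gt (τ ω) (ENNReal.ofReal t) with hle | hlt
        · refine Finset.sum_eq_zero fun j hj => ?_
          have e1 : Hf (p n j) ω = 1 := if_pos (hle.trans (ENNReal.ofReal_le_ofReal (hpt n j)))
          have e2 : Hf (p n (j+1)) ω = 1 := if_pos (hle.trans (ENNReal.ofReal_le_ofReal (hpt n (j+1))))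
          rw [e1, e2]
          ring
        · have hT' : ENNReal.ofReal T < τ ω := by
            rcases le_or_gt (τ ω) (ENNReal.ofReal T) with h | h
            · exact absurd ⟨hlt, h⟩ hcond
            · exact h
          refine Finset.sum_eq_zero fun j hj => ?_
          rw [Finset.mem_range] at hj
          have e1 : Hf (p n j) ω = 0 := by
            refine if_neg (not_le.mpr ?_)
            exact lt_of_le_of_lt (ENNReal.ofReal_le_ofReal (hpT n j (by omega))) hT'
          have e2 : Hf (p n (j+1)) ω = 0 := by
            refine if_neg (not_le.mpr ?_)
            exact lt_of_le_of_lt (ENNReal.ofReal_le_ofReal (hpT n (j+1) (by omega))) hT'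
          rw [e1, e2]
          ring
    -- membership of toReal
    have hrmem : ∀ ω, (ENNReal.ofReal t < τ ω ∧ τ ω ≤ ENNReal.ofReal T) → (τ ω).toReal ∈ Ioc t T := by
      rintro ω ⟨h1, h2⟩
      have hne : τ ω ≠ ⊤ := ne_top_of_le_ne_top ENNReal.ofReal_ne_top h2
      have hτr : τ ω = ENNReal.ofReal (τ ω).toReal := (ENNReal.ofReal_toReal hne).symm
      constructor
      · rw [hτr] at h1
        exact (ENNReal.ofReal_lt_ofReal_iff_of_nonneg ht).mp h1
      · rw [hτr] at h2
        exact (ENNReal.ofReal_le_ofReal_iff hT).mp h2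
    -- the approximating and limit functionals
    set f : Ω → ℝ := fun ω => if ENNReal.ofReal t < τ ω ∧ τ ω ≤ ENNReal.ofReal T
        then φ (τ ω).toReal ω else 0 with hfdef
    set fn : ℕ → Ω → ℝ := fun n ω => if ENNReal.ofReal t < τ ω ∧ τ ω ≤ ENNReal.ofReal T
        then ψ n (τ ω).toReal ω else 0 with hfndef
    set gn : ℕ → Ω → ℝ := fun n ω => ∫ u in Ioc t T, ψ n u ω * K u ω with hgndef
    set gT : Ω → ℝ := fun ω => ∫ u in Ioc t T, φ u ω * K u ω with hgTdef
    have hKnonneg : ∀ u ω, 0 ≤ K u ω := by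
      intro u ω
      by_cases h : ENNReal.ofReal u ≤ τ ω <;> simp [hK, h, hX_nonneg u ω]
    -- strong measurability of fn
    have hfnmeas : ∀ n, StronglyMeasurable (fn n) := by
      intro n
      have he : fn n = fun ω => ∑ i ∈ Finset.range (n+1),
          φ (p n i) ω * (Hf (p n (i+1)) ω - Hf (p n i) ω) :=
        funext fun ω => (hsum1 n ω).symm
      rw [he]
      refine Finset.stronglyMeasurable_fun_sum _ fun i _ => ?_
      exact ((hφad (p n i)).stronglyMeasurable.mono (𝒢.le _)).mul
        (((hHmeas (p n (i+1))).mono (𝒢.le _)).sub ((hHmeas (p n i)).mono (𝒢.le _)))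
    have hfnbdd : ∀ n ω, |fn n ω| ≤ C := by
      intro n ω
      rw [hfndef]
      simp only
      by_cases h : ENNReal.ofReal t < τ ω ∧ τ ω ≤ ENNReal.ofReal T
      · rw [if_pos h]
        exact hψbdd n ω _ (hrmem ω h)
      · rw [if_neg h]
        simpa using hCnn
    have hfconv : ∀ ω, Filter.Tendsto (fun n => fn n ω) Filter.atTop (nhds (f ω)) := by
      intro ω
      by_cases h : ENNReal.ofReal t < τ ω ∧ τ ω ≤ ENNReal.ofReal T
      · have he : ∀ n, fn n ω = φ (l n (τ ω).toReal) ω := by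
          intro n
          rw [hfndef]
          simp only
          rw [if_pos h, hψeq n ω _ (hrmem ω h)]
        have he2 : f ω = φ (τ ω).toReal ω := by rw [hfdef]; simp only [if_pos h]
        rw [he2]
        simp only [he]
        exact hφconv ω (τ ω).toReal
      · have he : ∀ n, fn n ω = 0 := fun n => by rw [hfndef]; simp only [if_neg h]
        have he2 : f ω = 0 := by rw [hfdef]; simp only [if_neg h]
        rw [he2]
        simp only [he]
        exact tendsto_const_nhds
    have hfmeas : StronglyMeasurable f :=
      stronglyMeasurable_of_tendsto _ hfnmeas (tendsto_pi_nhds.mpr hfconv)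
    have hfbdd : ∀ ω, |f ω| ≤ C := by
      intro ω
      rw [hfdef]
      simp only
      by_cases h : ENNReal.ofReal t < τ ω ∧ τ ω ≤ ENNReal.ofReal T
      · rw [if_pos h]; exact hC _ ω
      · rw [if_neg h]; simpa using hCnn
    have hfint : Integrable f μ :=
      Integrable.mono' (integrable_const C) hfmeas.aestronglyMeasurable
        (Filter.Eventually.of_forall hfbdd)
    have hfnint : ∀ n, Integrable (fn n) μ := fun n =>
      Integrable.mono' (integrable_const C) (hfnmeas n).aestronglyMeasurable
        (Filter.Eventually.of_forall (hfnbdd n))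
    -- u-section measurability of K on Ioc t T
    have hKsecae : ∀ ω, AEStronglyMeasurable (fun u => K u ω) ((volume : Measure ℝ).restrict (Ioc t T)) := by
      intro ω
      refine ((hKsec ω).aestronglyMeasurable).congr ?_
      refine (ae_restrict_iff' measurableSet_Ioc).mpr (Filter.Eventually.of_forall ?_)
      intro u hu
      simp only [hK, min_eq_left hu.2]
    have hψmeas_u : ∀ n ω, StronglyMeasurable (fun u => ψ n u ω) := by
      intro n ω
      refine Finset.stronglyMeasurable_fun_sum _ fun i _ => ?_
      exact stronglyMeasurable_const.indicator measurableSet_Ioc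
    have hsub0 : Ioc t T ⊆ Ioc 0 T := Ioc_subset_Ioc ht le_rfl
    have hsubi : ∀ n i, i ∈ Finset.range (n+1) → Ioc (p n i) (p n (i+1)) ⊆ Ioc t T := by
      intro n i hi
      rw [Finset.mem_range] at hi
      exact Ioc_subset_Ioc (hpt n i) (hpT n (i+1) (by omega))
    -- a.e. representation of gn as finite sum
    have hgnrep : ∀ n, (fun ω => ∑ i ∈ Finset.range (n+1),
        φ (p n i) ω * I (p n i) (p n (i+1)) ω) =ᵐ[μ] gn n := by
      intro n
      filter_upwards [hKint] with ω hω
      have hKint' : IntegrableOn (fun u => K u ω) (Ioc t T) (volume : Measure ℝ) :=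
        hω.mono_set hsub0
      have hterm : ∀ i ∈ Finset.range (n+1), IntegrableOn
          (fun u => (Ioc (p n i) (p n (i+1))).indicator (fun _ => φ (p n i) ω) u * K u ω)
          (Ioc t T) (volume : Measure ℝ) := by
        intro i hi
        have : (fun u => (Ioc (p n i) (p n (i+1))).indicator (fun _ => φ (p n i) ω) u * K u ω)
            = fun u => (Ioc (p n i) (p n (i+1))).indicator (fun u => φ (p n i) ω * K u ω) u := by
          funext u
          rw [Set.indicator_mul_left]
        rw [this]
        exact (hKint'.const_mul _).indicator measurableSet_Ioc
      rw [hgndef]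
      simp only
      have hsum : (fun u => ψ n u ω * K u ω) = fun u => ∑ i ∈ Finset.range (n+1),
          (Ioc (p n i) (p n (i+1))).indicator (fun _ => φ (p n i) ω) u * K u ω := by
        funext u
        rw [hψdef]
        simp only
        rw [Finset.sum_mul]
      rw [hsum, integral_finset_sum _ hterm]
      refine Finset.sum_congr rfl fun i hi => ?_
      have heq : (fun u => (Ioc (p n i) (p n (i+1))).indicator (fun _ => φ (p n i) ω) u * K u ω)
          = fun u => (Ioc (p n i) (p n (i+1))).indicator (fun u => φ (p n i) ω * K u ω) u := by
        funext u
        rw [Set.indicator_mul_left]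
      rw [heq, setIntegral_indicator measurableSet_Ioc,
        inter_eq_self_of_subset_right (hsubi n i hi), integral_const_mul]
    have hgnaem : ∀ n, AEStronglyMeasurable (gn n) μ := by
      intro n
      refine AEStronglyMeasurable.congr ?_ (hgnrep n)
      refine Finset.aestronglyMeasurable_fun_sum _ fun i hi => ?_
      refine AEStronglyMeasurable.mul ?_ ?_
      · exact ((hφad (p n i)).stronglyMeasurable.mono (𝒢.le _)).aestronglyMeasurable
      · have hii := Finset.mem_range.mp hi
        exact (hIint (p n i) (p n (i+1)) (ht.trans (hpt n i))
          (hpmono n i (i+1) (Nat.le_succ i)) (hpT n (i+1) (by omega))).aestronglyMeasurable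
    -- bound for gn
    have hItT_int : Integrable (fun ω => I t T ω) μ := hIint t T ht htT le_rfl
    have hgnbdd : ∀ n, ∀ᵐ ω ∂μ, ‖gn n ω‖ ≤ C * I t T ω := by
      intro n
      filter_upwards [hKint] with ω hω
      have hKint' : IntegrableOn (fun u => K u ω) (Ioc t T) (volume : Measure ℝ) :=
        hω.mono_set hsub0
      rw [hgndef]
      simp only
      have h1 : ‖∫ u in Ioc t T, ψ n u ω * K u ω‖ ≤ ∫ u in Ioc t T, C * K u ω := by
        refine norm_integral_le_of_norm_le (hKint'.const_mul C) ?_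
        refine (ae_restrict_iff' measurableSet_Ioc).mpr (Filter.Eventually.of_forall ?_)
        intro u hu
        rw [Real.norm_eq_abs, abs_mul, abs_of_nonneg (hKnonneg u ω)]
        exact mul_le_mul_of_nonneg_right (hψbdd n ω u hu) (hKnonneg u ω)
      rw [integral_const_mul] at h1
      exact h1
    -- convergence of gn to gT
    have hgnconv : ∀ᵐ ω ∂μ, Filter.Tendsto (fun n => gn n ω) Filter.atTop (nhds (gT ω)) := by
      filter_upwards [hKint] with ω hω
      have hKint' : IntegrableOn (fun u => K u ω) (Ioc t T) (volume : Measure ℝ) :=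
        hω.mono_set hsub0
      rw [hgndef, hgTdef]
      simp only
      refine tendsto_integral_of_dominated_convergence (fun u => C * K u ω) ?_ (hKint'.const_mul C) ?_ ?_
      · intro n
        exact ((hψmeas_u n ω).aestronglyMeasurable).mul (hKsecae ω)
      · intro n
        refine (ae_restrict_iff' measurableSet_Ioc).mpr (Filter.Eventually.of_forall ?_)
        intro u hu
        rw [Real.norm_eq_abs, abs_mul, abs_of_nonneg (hKnonneg u ω)]
        exact mul_le_mul_of_nonneg_right (hψbdd n ω u hu) (hKnonneg u ω)
      · refine (ae_restrict_iff' measurableSet_Ioc).mpr (Filter.Eventually.of_forall ?_)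
        intro u hu
        have h1 : ∀ n, ψ n u ω * K u ω = φ (l n u) ω * K u ω := fun n => by
          rw [hψeq n ω u hu]
        simp only [h1]
        exact (hφconv ω u).mul_const _
    -- gT a.e. measurable and integrable
    have hgTaem : AEStronglyMeasurable gT μ :=
      aestronglyMeasurable_of_tendsto_ae Filter.atTop hgnaem hgnconv
    have hgTbdd : ∀ᵐ ω ∂μ, ‖gT ω‖ ≤ C * I t T ω := by
      filter_upwards [hKint] with ω hω
      have hKint' : IntegrableOn (fun u => K u ω) (Ioc t T) (volume : Measure ℝ) :=
        hω.mono_set hsub0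
      rw [hgTdef]
      simp only
      have h1 : ‖∫ u in Ioc t T, φ u ω * K u ω‖ ≤ ∫ u in Ioc t T, C * K u ω := by
        refine norm_integral_le_of_norm_le (hKint'.const_mul C) ?_
        refine (ae_restrict_iff' measurableSet_Ioc).mpr (Filter.Eventually.of_forall ?_)
        intro u hu
        rw [Real.norm_eq_abs, abs_mul, abs_of_nonneg (hKnonneg u ω)]
        exact mul_le_mul_of_nonneg_right (hC u ω) (hKnonneg u ω)
      rw [integral_const_mul] at h1
      exact h1
    have hgTint : Integrable gT μ :=
      Integrable.mono' (hItT_int.const_mul C) hgTaem hgTbdd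
    -- step identity
    have hstep : ∀ n (A : Set Ω), MeasurableSet[𝒢 t] A →
        ∫ ω, A.indicator (fn n) ω ∂μ = ∫ ω, A.indicator (gn n) ω ∂μ := by
      intro n A hA
      set indA : Ω → ℝ := A.indicator (fun _ => 1) with hindAdef
      have hindA_meas : ∀ s : ℝ, t ≤ s → StronglyMeasurable[𝒢 s] indA := fun s hs =>
        stronglyMeasurable_const.indicator (𝒢.mono hs _ hA)
      have hindA_bdd : ∀ ω, |indA ω| ≤ 1 := by
        intro ω
        by_cases h : ω ∈ A <;> simp [hindAdef, indicator_apply, h]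
      have hL : (fun ω => A.indicator (fn n) ω) = fun ω => ∑ i ∈ Finset.range (n+1),
          (indA ω * φ (p n i) ω) * (Hf (p n (i+1)) ω - Hf (p n i) ω) := by
        funext ω
        have h1 : A.indicator (fn n) ω = indA ω * fn n ω := by
          by_cases h : ω ∈ A <;> simp [hindAdef, indicator_apply, h]
        rw [h1]
        simp only [hfndef]
        rw [← hsum1 n ω, Finset.mul_sum]
        exact Finset.sum_congr rfl fun i _ => by ring
      have hgi : ∀ i, StronglyMeasurable[𝒢 (p n i)] (fun ω => indA ω * φ (p n i) ω) :=
        fun i => (hindA_meas _ (hpt n i)).mul (hφad (p n i)).stronglyMeasurable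
      have hgiC : ∀ i ω, |indA ω * φ (p n i) ω| ≤ C := by
        intro i ω
        rw [abs_mul]
        calc |indA ω| * |φ (p n i) ω| ≤ 1 * C :=
              mul_le_mul (hindA_bdd ω) (hC _ ω) (abs_nonneg _) zero_le_one
          _ = C := one_mul C
      have hterm1 : ∀ i ∈ Finset.range (n+1), Integrable
          (fun ω => (indA ω * φ (p n i) ω) * (Hf (p n (i+1)) ω - Hf (p n i) ω)) μ := by
        intro i _
        exact ((hHint _).sub (hHint _)).bdd_mul
          (((hgi i).mono (𝒢.le _)).aestronglyMeasurable) (Filter.Eventually.of_forall fun ω => hgiC i ω)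
      have hterm2 : ∀ i ∈ Finset.range (n+1), Integrable
          (fun ω => (indA ω * φ (p n i) ω) * I (p n i) (p n (i+1)) ω) μ := by
        intro i hi
        rw [Finset.mem_range] at hi
        exact (hIint (p n i) (p n (i+1)) (ht.trans (hpt n i)) (hpmono n i (i+1) (Nat.le_succ i))
          (hpT n (i+1) (by omega))).bdd_mul
          (((hgi i).mono (𝒢.le _)).aestronglyMeasurable) (Filter.Eventually.of_forall fun ω => hgiC i ω)
      rw [hL, integral_finset_sum _ hterm1]
      have hR : ∀ i ∈ Finset.range (n+1),
          ∫ ω, (indA ω * φ (p n i) ω) * (Hf (p n (i+1)) ω - Hf (p n i) ω) ∂μ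
          = ∫ ω, (indA ω * φ (p n i) ω) * I (p n i) (p n (i+1)) ω ∂μ := by
        intro i hi
        rw [Finset.mem_range] at hi
        exact key (p n i) (p n (i+1)) (ht.trans (hpt n i)) (hpmono n i (i+1) (Nat.le_succ i))
          (hpT n (i+1) (by omega)) _ (hgi i) (hgiC i)
      rw [Finset.sum_congr rfl hR, ← integral_finset_sum _ hterm2]
      refine integral_congr_ae ?_
      filter_upwards [hgnrep n] with ω hω
      have h2 : ∑ i ∈ Finset.range (n+1), (indA ω * φ (p n i) ω) * I (p n i) (p n (i+1)) ω
          = indA ω * ∑ i ∈ Finset.range (n+1), φ (p n i) ω * I (p n i) (p n (i+1)) ω := by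
        rw [Finset.mul_sum]
        exact Finset.sum_congr rfl fun i _ => by ring
      rw [h2, hω]
      by_cases h : ω ∈ A <;> simp [hindAdef, indicator_apply, h]
    -- nonnegativity of I t T a.e.
    have hItT_nn : ∀ᵐ ω ∂μ, 0 ≤ I t T ω := by
      filter_upwards [hKint] with ω hω
      exact integral_nonneg fun u => hKnonneg u ω
    -- limits
    have hmain : ∀ A : Set Ω, MeasurableSet[𝒢 t] A →
        ∫ ω in A, f ω ∂μ = ∫ ω in A, gT ω ∂μ := by
      intro A hA
      have hAm : MeasurableSet A := hm _ hA
      have hlim1 : Filter.Tendsto (fun n => ∫ ω, A.indicator (fn n) ω ∂μ) Filter.atTop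
          (nhds (∫ ω, A.indicator f ω ∂μ)) := by
        refine tendsto_integral_of_dominated_convergence (fun _ => C) ?_ (integrable_const C) ?_ ?_
        · intro n
          exact ((hfnmeas n).indicator hAm).aestronglyMeasurable
        · intro n
          refine Filter.Eventually.of_forall fun ω => ?_
          by_cases h : ω ∈ A
          · simp only [indicator_apply, if_pos h, Real.norm_eq_abs]
            exact hfnbdd n ω
          · simp only [indicator_apply, if_neg h, norm_zero]
            exact hCnn
        · refine Filter.Eventually.of_forall fun ω => ?_
          by_cases h : ω ∈ A
          · simp only [indicator_apply, if_pos h]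
            exact hfconv ω
          · simp only [indicator_apply, if_neg h]
            exact tendsto_const_nhds
      have hlim2 : Filter.Tendsto (fun n => ∫ ω, A.indicator (gn n) ω ∂μ) Filter.atTop
          (nhds (∫ ω, A.indicator gT ω ∂μ)) := by
        refine tendsto_integral_of_dominated_convergence (fun ω => C * I t T ω) ?_
          (hItT_int.const_mul C) ?_ ?_
        · intro n
          exact (hgnaem n).indicator hAm
        · intro n
          filter_upwards [hgnbdd n, hItT_nn] with ω h1 h2
          by_cases h : ω ∈ A
          · simpa only [indicator_apply, if_pos h] using h1
          · simp only [indicator_apply, if_neg h, norm_zero]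
            exact mul_nonneg hCnn h2
        · filter_upwards [hgnconv] with ω h1
          by_cases h : ω ∈ A
          · simpa only [indicator_apply, if_pos h] using h1
          · simp only [indicator_apply, if_neg h]
            exact tendsto_const_nhds
      have heq : (fun n => ∫ ω, A.indicator (fn n) ω ∂μ)
          = fun n => ∫ ω, A.indicator (gn n) ω ∂μ := funext fun n => hstep n A hA
      rw [heq] at hlim1
      have := tendsto_nhds_unique hlim1 hlim2
      rwa [integral_indicator hAm, integral_indicator hAm] at this
    -- conclusion
    haveI : SigmaFinite (μ.trim hm) := inferInstance
    have hfinal : μ[f | 𝒢 t] =ᵐ[μ] μ[gT | 𝒢 t] := by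
      refine (ae_eq_condExp_of_forall_setIntegral_eq hm hfint
        (fun s hs _ => integrable_condExp.integrableOn) (fun s hs hμs => ?_)
        stronglyMeasurable_condExp.aestronglyMeasurable).symm
      rw [setIntegral_condExp hm hgTint hs]
      exact (hmain s hs).symm
    have hgteq : (fun ω => ∫ u in Ioc t T,
        (if ENNReal.ofReal u ≤ τ ω then φ u ω * X u ω else 0)) = gT := by
      funext ω
      rw [hgTdef]
      simp only
      refine integral_congr_ae (Filter.Eventually.of_forall fun u => ?_)
      by_cases h : ENNReal.ofReal u ≤ τ ω <;> simp [hK, h]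
    rw [hgteq]
    exact hfinal
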